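/- Suppose the sequence (x^k, λ^k) is generated by P-ALM, i.e., x^{k+1} ∈ X minimizes x ↦ θ(x) − ⟨λ^k, Ax − b⟩ + (r/2)‖A(x − x^k)‖² + (1/2)⟨x − x^k, Q(x − x^k)⟩ over X and λ^{k+1} = λ^k − r(A(2x^{k+1} − x^k) − b). Then for every k and every w ∈ M: θ(x) − θ(x^{k+1}) + ⟨w − w^{k+1}, J(w)⟩ ≥ (1/2)(‖w − w^{k+1}‖²_H − ‖w − w^k‖²_H) + (1/2)‖w^k − w^{k+1}‖²_H, where w^k = (x^k, λ^k). -/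

import Mathlib

/-!
Minimality of `x^{k+1}` in the P-ALM subproblem, tested along the segment towards any `z ∈ X`
and combined with convexity of `θ`, gives the variational inequality
`θ(z) - θ(x^{k+1}) + ⟨z - x^{k+1}, (rAᵀA + Q)(x^{k+1} - x^k) - Aᵀλ^k⟩ ≥ 0`.
By the multiplier update this is exactly
`θ(x) - θ(x^{k+1}) + ⟨w - w^{k+1}, J(w^{k+1})⟩ ≥ ⟨w - w^{k+1}, H(w^k - w^{k+1})⟩`.
Since `J` is affine with skew-symmetric linear part, `J(w^{k+1})` may be replaced by `J(w)`,
and the polarization identity for the symmetric form `H` turns the right-hand side into the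
claimed combination of `H`-norms.
-/

open Matrix Finset

noncomputable section

/-- The bilinear form `(w₁, w₂) ↦ ⟨w₁, H w₂⟩` of the P-ALM matrix
`H = [[rAᵀA + Q, Aᵀ], [A, (1/r)I]]` on `ℝⁿ × ℝᵐ`. -/
def Hbil {n m : ℕ} (A : Matrix (Fin m) (Fin n) ℝ) (Q : Matrix (Fin n) (Fin n) ℝ) (r : ℝ)
    (w₁ w₂ : (Fin n → ℝ) × (Fin m → ℝ)) : ℝ :=
  w₁.1 ⬝ᵥ ((r • (Aᵀ * A) + Q) *ᵥ w₂.1) + w₁.1 ⬝ᵥ (Aᵀ *ᵥ w₂.2) + w₁.2 ⬝ᵥ (A *ᵥ w₂.1)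
    + 1 / r * (w₁.2 ⬝ᵥ w₂.2)

/-- The squared `H`-weighted norm `‖w‖²_H = ⟨w, Hw⟩`. -/
def HnormSq {n m : ℕ} (A : Matrix (Fin m) (Fin n) ℝ) (Q : Matrix (Fin n) (Fin n) ℝ) (r : ℝ)
    (w : (Fin n → ℝ) × (Fin m → ℝ)) : ℝ := Hbil A Q r w w

/-- The affine map `J(x, λ) = (−Aᵀλ, Ax − b)`. -/
def Jmap {n m : ℕ} (A : Matrix (Fin m) (Fin n) ℝ) (b : Fin m → ℝ)
    (w : (Fin n → ℝ) × (Fin m → ℝ)) : (Fin n → ℝ) × (Fin m → ℝ) :=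
  (-(Aᵀ *ᵥ w.2), A *ᵥ w.1 - b)

/-- The Euclidean inner product on `ℝⁿ × ℝᵐ`. -/
def pdot {n m : ℕ} (w₁ w₂ : (Fin n → ℝ) × (Fin m → ℝ)) : ℝ := w₁.1 ⬝ᵥ w₂.1 + w₁.2 ⬝ᵥ w₂.2

/-- `w* = (x*, λ*)` belongs to the solution set `M*` of `VI(θ, J, M)`, `M = X × ℝᵐ`:
`w*.1 ∈ X` and `θ(x) − θ(x*) + ⟨w − w*, J(w*)⟩ ≥ 0` for all `w ∈ M`. -/
def SolPoint {n m : ℕ} (θ : (Fin n → ℝ) → ℝ) (X : Set (Fin n → ℝ))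
    (A : Matrix (Fin m) (Fin n) ℝ) (b : Fin m → ℝ) (ws : (Fin n → ℝ) × (Fin m → ℝ)) : Prop :=
  ws.1 ∈ X ∧ ∀ w : (Fin n → ℝ) × (Fin m → ℝ), w.1 ∈ X →
    θ w.1 - θ ws.1 + pdot (w - ws) (Jmap A b ws) ≥ 0

/-- The P-ALM iteration: `x^{k+1} ∈ X` minimizes
`x ↦ θ(x) − ⟨λᵏ, Ax − b⟩ + (r/2)‖A(x − xᵏ)‖² + (1/2)⟨x − xᵏ, Q(x − xᵏ)⟩` over `X`, and
`λ^{k+1} = λᵏ − r(A(2x^{k+1} − xᵏ) − b)`. -/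
def PALM {n m : ℕ} (θ : (Fin n → ℝ) → ℝ) (X : Set (Fin n → ℝ))
    (A : Matrix (Fin m) (Fin n) ℝ) (b : Fin m → ℝ) (r : ℝ) (Q : Matrix (Fin n) (Fin n) ℝ)
    (x : ℕ → Fin n → ℝ) (lam : ℕ → Fin m → ℝ) : Prop :=
  (∀ k : ℕ, x (k + 1) ∈ X ∧ ∀ z ∈ X,
      θ (x (k + 1)) - lam k ⬝ᵥ (A *ᵥ x (k + 1) - b)
          + r / 2 * ((A *ᵥ (x (k + 1) - x k)) ⬝ᵥ (A *ᵥ (x (k + 1) - x k)))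
          + 1 / 2 * ((x (k + 1) - x k) ⬝ᵥ (Q *ᵥ (x (k + 1) - x k)))
        ≤ θ z - lam k ⬝ᵥ (A *ᵥ z - b)
          + r / 2 * ((A *ᵥ (z - x k)) ⬝ᵥ (A *ᵥ (z - x k)))
          + 1 / 2 * ((z - x k) ⬝ᵥ (Q *ᵥ (z - x k)))) ∧
  (∀ k : ℕ, lam (k + 1) = lam k - r • (A *ᵥ ((2 : ℝ) • x (k + 1) - x k) - b))

open Filter Topology

lemma nonneg_of_forall_nonneg_add_mul {L C : ℝ}
    (h : ∀ t : ℝ, 0 < t → t ≤ 1 → 0 ≤ L + t * C) : 0 ≤ L := by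
  have hlim : Tendsto (fun t : ℝ => L + t * C) (𝓝[>] 0) (𝓝 L) := by
    have hcont : Continuous fun t : ℝ => L + t * C := by fun_prop
    simpa using (hcont.tendsto 0).mono_left nhdsWithin_le_nhds
  refine ge_of_tendsto hlim ?_
  filter_upwards [Ioc_mem_nhdsGT one_pos] with t ht using h t ht.1 ht.2

/-- First-order optimality for `θ + q` over `X`: here `L` is the slope of `q` at `x₁` in the
direction `z - x₁`. -/
theorem ConvexOn.sub_add_slope_nonneg_of_isMinOn_add {E : Type*} [AddCommGroup E] [Module ℝ E]
    {X : Set E} {θ q : E → ℝ} {x₁ z : E} {L C : ℝ} (hθ : ConvexOn ℝ X θ)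
    (hmin : IsMinOn (θ + q) X x₁) (hx₁ : x₁ ∈ X) (hz : z ∈ X)
    (hq : ∀ t : ℝ, q (x₁ + t • (z - x₁)) = q x₁ + t * L + t ^ 2 * C) :
    0 ≤ θ z - θ x₁ + L := by
  refine nonneg_of_forall_nonneg_add_mul (C := C) fun t ht₀ ht₁ => ?_
  have hseg : x₁ + t • (z - x₁) = (1 - t) • x₁ + t • z := by module
  have hθt : θ (x₁ + t • (z - x₁)) ≤ (1 - t) * θ x₁ + t * θ z := by
    rw [hseg]; exact hθ.2 hx₁ hz (by linarith) ht₀.le (by ring)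
  have hmint : θ x₁ + q x₁ ≤ θ (x₁ + t • (z - x₁)) + q (x₁ + t • (z - x₁)) := by
    rw [hseg]; exact hmin (hθ.1 hx₁ hz (by linarith) ht₀.le (by ring))
  rw [hq] at hmint
  have hscaled : 0 ≤ t * (θ z - θ x₁ + L + t * C) := by nlinarith
  linarith [(mul_nonneg_iff_of_pos_left ht₀).1 hscaled]

theorem Matrix.IsSymm.dotProduct_mulVec_comm {ι R : Type*} [Fintype ι] [CommSemiring R]
    {P : Matrix ι ι R} (hP : P.IsSymm) (u v : ι → R) :
    u ⬝ᵥ (P *ᵥ v) = v ⬝ᵥ (P *ᵥ u) := by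
  rw [dotProduct_mulVec, ← mulVec_transpose, hP.eq, dotProduct_comm]

theorem Matrix.isSymm_smul_transpose_mul_self_add {ι κ R : Type*} [Fintype κ] [CommSemiring R]
    (A : Matrix κ ι R) (r : R) {Q : Matrix ι ι R} (hQ : Q.IsSymm) :
    (r • (Aᵀ * A) + Q).IsSymm := by
  refine IsSymm.add (IsSymm.smul ?_ r) hQ
  rw [IsSymm, transpose_mul, transpose_transpose]

section PALM

variable {n m : ℕ} {A : Matrix (Fin m) (Fin n) ℝ} {b : Fin m → ℝ} {r : ℝ}
  {Q : Matrix (Fin n) (Fin n) ℝ}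

theorem palm_subproblem_optimality {θ : (Fin n → ℝ) → ℝ} {X : Set (Fin n → ℝ)}
    (hθ : ConvexOn ℝ X θ) (hQ : Q.IsSymm) {xk x₁ : Fin n → ℝ} {lamk : Fin m → ℝ}
    (hx₁ : x₁ ∈ X)
    (hmin : ∀ z ∈ X,
      θ x₁ - lamk ⬝ᵥ (A *ᵥ x₁ - b)
          + r / 2 * ((A *ᵥ (x₁ - xk)) ⬝ᵥ (A *ᵥ (x₁ - xk)))
          + 1 / 2 * ((x₁ - xk) ⬝ᵥ (Q *ᵥ (x₁ - xk)))
        ≤ θ z - lamk ⬝ᵥ (A *ᵥ z - b)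
          + r / 2 * ((A *ᵥ (z - xk)) ⬝ᵥ (A *ᵥ (z - xk)))
          + 1 / 2 * ((z - xk) ⬝ᵥ (Q *ᵥ (z - xk))))
    {z : Fin n → ℝ} (hz : z ∈ X) :
    0 ≤ θ z - θ x₁ + (z - x₁) ⬝ᵥ ((r • (Aᵀ * A) + Q) *ᵥ (x₁ - xk) - Aᵀ *ᵥ lamk) := by
  set P := r • (Aᵀ * A) + Q
  have hP : P.IsSymm := isSymm_smul_transpose_mul_self_add A r hQ
  have hquad : ∀ v, r / 2 * ((A *ᵥ v) ⬝ᵥ (A *ᵥ v)) + 1 / 2 * (v ⬝ᵥ (Q *ᵥ v))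
      = 1 / 2 * (v ⬝ᵥ (P *ᵥ v)) := fun v => by
    simp only [P, add_mulVec, smul_mulVec, ← mulVec_mulVec, dotProduct_add, dotProduct_smul,
      dotProduct_transpose_mulVec, smul_eq_mul]
    ring
  refine hθ.sub_add_slope_nonneg_of_isMinOn_add (q := fun y =>
      -(lamk ⬝ᵥ (A *ᵥ y - b)) + 1 / 2 * ((y - xk) ⬝ᵥ (P *ᵥ (y - xk))))
    (C := 1 / 2 * ((z - x₁) ⬝ᵥ (P *ᵥ (z - x₁)))) (fun y hy => ?_) hx₁ hz (fun t => ?_)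
  · have h := hmin y hy
    rw [add_assoc, hquad, add_assoc, hquad] at h
    simp only [Set.mem_ofPred_eq, Pi.add_apply]
    linarith
  · have hshift : x₁ + t • (z - x₁) - xk = (x₁ - xk) + t • (z - x₁) := by abel
    simp only [hshift, mulVec_add, mulVec_smul, dotProduct_add, dotProduct_sub, add_dotProduct,
      dotProduct_smul, smul_dotProduct, dotProduct_transpose_mulVec,
      hP.dotProduct_mulVec_comm (x₁ - xk), smul_eq_mul]
    ring

theorem Hbil_comm (hQ : Q.IsSymm) (w₁ w₂ : (Fin n → ℝ) × (Fin m → ℝ)) :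
    Hbil A Q r w₁ w₂ = Hbil A Q r w₂ w₁ := by
  simp only [Hbil, (isSymm_smul_transpose_mul_self_add A r hQ).dotProduct_mulVec_comm w₁.1,
    dotProduct_transpose_mulVec, dotProduct_comm w₁.2]
  ring

theorem HnormSq_sub (hQ : Q.IsSymm) (u v : (Fin n → ℝ) × (Fin m → ℝ)) :
    HnormSq A Q r (u - v) = HnormSq A Q r u - 2 * Hbil A Q r u v + HnormSq A Q r v := by
  have hexp : HnormSq A Q r (u - v)
      = HnormSq A Q r u - Hbil A Q r u v - Hbil A Q r v u + HnormSq A Q r v := by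
    simp only [HnormSq, Hbil, Prod.fst_sub, Prod.snd_sub, mulVec_sub, dotProduct_sub,
      sub_dotProduct]
    ring
  rw [hexp, Hbil_comm hQ v u]
  ring

theorem pdot_sub_Jmap_eq (w w' : (Fin n → ℝ) × (Fin m → ℝ)) :
    pdot (w - w') (Jmap A b w) = pdot (w - w') (Jmap A b w') := by
  simp only [pdot, Jmap, Prod.fst_sub, Prod.snd_sub, mulVec_sub, dotProduct_sub, sub_dotProduct,
    dotProduct_neg, dotProduct_transpose_mulVec]
  ring

theorem pdot_Jmap_sub_Hbil_eq (hr : r ≠ 0) {xk x₁ : Fin n → ℝ} {lamk lam₁ : Fin m → ℝ}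
    (hlam : lam₁ = lamk - r • (A *ᵥ ((2 : ℝ) • x₁ - xk) - b))
    (w : (Fin n → ℝ) × (Fin m → ℝ)) :
    pdot (w - (x₁, lam₁)) (Jmap A b (x₁, lam₁))
        - Hbil A Q r (w - (x₁, lam₁)) ((xk, lamk) - (x₁, lam₁))
      = (w.1 - x₁) ⬝ᵥ ((r • (Aᵀ * A) + Q) *ᵥ (x₁ - xk) - Aᵀ *ᵥ lamk) := by
  subst hlam
  simp only [pdot, Jmap, Hbil, Prod.fst_sub, Prod.snd_sub, sub_sub_cancel, add_mulVec,
    smul_mulVec, ← mulVec_mulVec, mulVec_sub, mulVec_smul, dotProduct_add, dotProduct_sub,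
    sub_dotProduct, dotProduct_smul, dotProduct_neg, dotProduct_transpose_mulVec, smul_eq_mul]
  field_simp
  ring

end PALM

theorem stmt_5_general (n m : ℕ) (θ : (Fin n → ℝ) → ℝ) (hθ : ConvexOn ℝ Set.univ θ)
    (X : Set (Fin n → ℝ)) (hXconvex : Convex ℝ X)
    (A : Matrix (Fin m) (Fin n) ℝ) (b : Fin m → ℝ) (r : ℝ) (hr : 0 < r)
    (Q : Matrix (Fin n) (Fin n) ℝ) (hQ : Q.PosDef)
    (x : ℕ → Fin n → ℝ) (lam : ℕ → Fin m → ℝ) (halg : PALM θ X A b r Q x lam) :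
    ∀ k : ℕ, ∀ w : (Fin n → ℝ) × (Fin m → ℝ), w.1 ∈ X →
      θ w.1 - θ (x (k + 1)) + pdot (w - (x (k + 1), lam (k + 1))) (Jmap A b w) ≥
        1 / 2 * (HnormSq A Q r (w - (x (k + 1), lam (k + 1)))
              - HnormSq A Q r (w - (x k, lam k)))
          + 1 / 2 * HnormSq A Q r ((x k, lam k) - (x (k + 1), lam (k + 1))) := by
  intro k w hw
  obtain ⟨hx₁, hmin⟩ := halg.1 k
  have hQs : Q.IsSymm := isHermitian_iff_isSymm.1 hQ.1
  have hopt := palm_subproblem_optimality (hθ.subset (Set.subset_univ X) hXconvex) hQs hx₁ hmin hw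
  have hstep := pdot_Jmap_sub_Hbil_eq (Q := Q) hr.ne' (halg.2 k) w
  have hpolar : w - (x k, lam k)
      = (w - (x (k + 1), lam (k + 1))) - ((x k, lam k) - (x (k + 1), lam (k + 1))) := by abel
  rw [pdot_sub_Jmap_eq, hpolar, HnormSq_sub hQs (w - (x (k + 1), lam (k + 1)))]
  linarith

/-- Lemma 2.2, inequality (9). -/
theorem stmt_5 (n m : ℕ) (θ : (Fin n → ℝ) → ℝ) (hθ : ConvexOn ℝ Set.univ θ)
    (X : Set (Fin n → ℝ)) (hXne : X.Nonempty) (hXclosed : IsClosed X) (hXconvex : Convex ℝ X)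
    (A : Matrix (Fin m) (Fin n) ℝ) (b : Fin m → ℝ) (r : ℝ) (hr : 0 < r)
    (Q : Matrix (Fin n) (Fin n) ℝ) (hQ : Q.PosDef)
    (x : ℕ → Fin n → ℝ) (lam : ℕ → Fin m → ℝ) (halg : PALM θ X A b r Q x lam) :
    ∀ k : ℕ, ∀ w : (Fin n → ℝ) × (Fin m → ℝ), w.1 ∈ X →
      θ w.1 - θ (x (k + 1)) + pdot (w - (x (k + 1), lam (k + 1))) (Jmap A b w) ≥
        1 / 2 * (HnormSq A Q r (w - (x (k + 1), lam (k + 1)))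
              - HnormSq A Q r (w - (x k, lam k)))
          + 1 / 2 * HnormSq A Q r ((x k, lam k) - (x (k + 1), lam (k + 1))) :=
  stmt_5_general n m θ hθ X hXconvex A b r hr Q hQ x lam halg
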